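/- arXiv:2507.12656 — 3 statements merged into one kernel-verified Lean document; each statement's English description precedes it below -/
import Mathlib

section
/- Let $(X, \mathcal{A}, \mu)$ be a measure space with $\mu(X) < \infty$, and let $\nu$ be a Lévy measure on $\mathbb{R}$, i.e. a Borel measure with $\nu(\{0\}) = 0$ and $\int_{\mathbb{R}} (|z|^2 \wedge 1)\,\nu(dz) < \infty$. Let $p \in (0,2]$ and let $g : X \to [0,\infty]$ be measurable with $\int_X g(x)^p\,\mu(dx) < \infty$ and $\int_{\{0 < |z| \le 1\}} |z|^p\,\nu(dz) < \infty$. Then $\int_X \int_{\mathbb{R}} \bigl( |z\,g(x)|^2 \wedge 1 \bigr)\,\nu(dz)\,\mu(dx) < \infty$. -/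
open MeasureTheory ENNReal Set

lemma ENNReal.one_le_rpow_of_nonneg {t : ℝ≥0∞} {p : ℝ} (ht : 1 ≤ t) (hp0 : 0 ≤ p) :
    1 ≤ t ^ p := by
  simpa using ENNReal.rpow_le_rpow_of_exponent_le ht hp0

lemma ENNReal.min_sq_one_le_min_rpow_one {p : ℝ} (hp0 : 0 ≤ p) (hp2 : p ≤ 2) (t : ℝ≥0∞) :
    min (t ^ 2) 1 ≤ min (t ^ p) 1 := by
  rcases le_total t 1 with ht | ht
  · gcongr
    rw [← ENNReal.rpow_two]
    exact ENNReal.rpow_le_rpow_of_exponent_ge ht hp2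
  · simp [ENNReal.one_le_rpow_of_nonneg ht hp0, one_le_pow₀ ht]

lemma ENNReal.min_mul_one_le_mul_min_one {c : ℝ≥0∞} (hc : 1 ≤ c) (x : ℝ≥0∞) :
    min (c * x) 1 ≤ c * min x 1 := by
  rw [mul_min_of_nonneg _ _ zero_le, mul_one]
  exact min_le_min_left _ hc

/-- The cases `b ≤ 1` and `1 ≤ b` are the split of `X` into `{g ≤ 1}` and `{g > 1}`. -/
lemma ENNReal.min_mul_sq_one_le {p : ℝ} (hp0 : 0 ≤ p) (hp2 : p ≤ 2) (a b : ℝ≥0∞) :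
    min ((a * b) ^ 2) 1 ≤ min (a ^ 2) 1 + b ^ p * min (a ^ p) 1 := by
  rcases le_total b 1 with hb | hb
  · refine le_add_right (min_le_min_right _ ?_)
    simpa using pow_le_pow_left₀ zero_le (mul_le_of_le_one_right zero_le hb) 2
  · refine le_add_left ?_
    calc min ((a * b) ^ 2) 1 ≤ min ((a * b) ^ p) 1 :=
          ENNReal.min_sq_one_le_min_rpow_one hp0 hp2 _
      _ = min (b ^ p * a ^ p) 1 := by rw [ENNReal.mul_rpow_of_nonneg _ _ hp0, mul_comm]
      _ ≤ b ^ p * min (a ^ p) 1 :=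
          ENNReal.min_mul_one_le_mul_min_one (ENNReal.one_le_rpow_of_nonneg hb hp0) _

lemma lintegral_min_abs_rpow_one_lt_top (ν : Measure ℝ) {p : ℝ} (hp0 : 0 < p)
    (hν : ∫⁻ z, min (ENNReal.ofReal (z ^ 2)) 1 ∂ν < ⊤)
    (hνp : ∫⁻ z in {z : ℝ | 0 < |z| ∧ |z| ≤ 1}, ENNReal.ofReal (|z| ^ p) ∂ν < ⊤) :
    ∫⁻ z, min (ENNReal.ofReal (|z| ^ p)) 1 ∂ν < ⊤ := by
  set S := {z : ℝ | 0 < |z| ∧ |z| ≤ 1}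
  have hS : MeasurableSet S := by measurability
  have hpt (z : ℝ) : min (ENNReal.ofReal (|z| ^ p)) 1 ≤
      S.indicator (fun z => ENNReal.ofReal (|z| ^ p)) z + min (ENNReal.ofReal (z ^ 2)) 1 := by
    rcases eq_or_ne z 0 with rfl | hz0
    · simp [Real.zero_rpow hp0.ne']
    rcases le_or_gt |z| 1 with hz1 | hz1
    · rw [indicator_of_mem (show z ∈ S from ⟨abs_pos.2 hz0, hz1⟩)]
      exact le_add_right (min_le_left _ _)
    · have hz2 : (1 : ℝ≥0∞) ≤ ENNReal.ofReal (z ^ 2) := by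
        rw [← ENNReal.ofReal_one]
        exact ENNReal.ofReal_le_ofReal (by nlinarith [sq_abs z])
      simp [hz2]
  calc ∫⁻ z, min (ENNReal.ofReal (|z| ^ p)) 1 ∂ν
      ≤ ∫⁻ z, (S.indicator (fun z => ENNReal.ofReal (|z| ^ p)) z
          + min (ENNReal.ofReal (z ^ 2)) 1) ∂ν := lintegral_mono hpt
    _ = ∫⁻ z in S, ENNReal.ofReal (|z| ^ p) ∂ν + ∫⁻ z, min (ENNReal.ofReal (z ^ 2)) 1 ∂ν := by
        rw [lintegral_add_right _ (by fun_prop), lintegral_indicator hS]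
    _ < ⊤ := ENNReal.add_lt_top.2 ⟨hνp, hν⟩

lemma lintegral_min_mul_sq_one_le (ν : Measure ℝ) {p : ℝ} (hp0 : 0 ≤ p) (hp2 : p ≤ 2)
    (c : ℝ≥0∞) :
    ∫⁻ z, min ((ENNReal.ofReal |z| * c) ^ 2) 1 ∂ν ≤
      ∫⁻ z, min (ENNReal.ofReal (z ^ 2)) 1 ∂ν
        + c ^ p * ∫⁻ z, min (ENNReal.ofReal (|z| ^ p)) 1 ∂ν := by
  rw [← lintegral_const_mul _ (by fun_prop), ← lintegral_add_left (by fun_prop)]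
  refine lintegral_mono fun z => ?_
  rw [← sq_abs, ENNReal.ofReal_pow (abs_nonneg z),
    ← ENNReal.ofReal_rpow_of_nonneg (abs_nonneg z) hp0]
  exact ENNReal.min_mul_sq_one_le hp0 hp2 _ _

theorem stmt_2_general
    {X : Type*} [MeasurableSpace X] (μ : Measure X) [IsFiniteMeasure μ]
    (ν : Measure ℝ)
    (hν : ∫⁻ z, min (ENNReal.ofReal (z ^ 2)) 1 ∂ν < ⊤)
    (p : ℝ) (hp0 : 0 < p) (hp2 : p ≤ 2)
    (g : X → ℝ≥0∞)
    (hgp : ∫⁻ x, g x ^ p ∂μ < ⊤)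
    (hνp : ∫⁻ z in {z : ℝ | 0 < |z| ∧ |z| ≤ 1}, ENNReal.ofReal (|z| ^ p) ∂ν < ⊤) :
    ∫⁻ x, ∫⁻ z, min ((ENNReal.ofReal |z| * g x) ^ 2) 1 ∂ν ∂μ < ⊤ := by
  set C₁ := ∫⁻ z, min (ENNReal.ofReal (z ^ 2)) 1 ∂ν
  set C₂ := ∫⁻ z, min (ENNReal.ofReal (|z| ^ p)) 1 ∂ν
  have hC₂ : C₂ < ⊤ := lintegral_min_abs_rpow_one_lt_top ν hp0 hν hνp
  calc ∫⁻ x, ∫⁻ z, min ((ENNReal.ofReal |z| * g x) ^ 2) 1 ∂ν ∂μ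
      ≤ ∫⁻ x, (C₁ + g x ^ p * C₂) ∂μ :=
        lintegral_mono fun x => lintegral_min_mul_sq_one_le ν hp0.le hp2 (g x)
    _ = C₁ * μ univ + (∫⁻ x, g x ^ p ∂μ) * C₂ := by
        rw [lintegral_add_left measurable_const, lintegral_const,
          lintegral_mul_const' _ _ hC₂.ne]
    _ < ⊤ := ENNReal.add_lt_top.2
        ⟨ENNReal.mul_lt_top hν (measure_lt_top μ _), ENNReal.mul_lt_top hgp hC₂⟩

/-- Rajput–Rosinski integrability criterion. If `μ` is a finite measure,
`ν` a Lévy measure on `ℝ`, `p ∈ (0,2]`, `g ≥ 0` measurable with `∫ g^p dμ < ∞` and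
`∫_{0<|z|≤1} |z|^p ν(dz) < ∞`, then `∫∫ (|z g(x)|² ∧ 1) ν(dz) μ(dx) < ∞`. -/
theorem stmt_2
    {X : Type*} [MeasurableSpace X] (μ : Measure X) [IsFiniteMeasure μ]
    (ν : Measure ℝ) (hν0 : ν {0} = 0)
    (hν : ∫⁻ z, min (ENNReal.ofReal (z ^ 2)) 1 ∂ν < ⊤)
    (p : ℝ) (hp0 : 0 < p) (hp2 : p ≤ 2)
    (g : X → ℝ≥0∞) (hg : Measurable g)
    (hgp : ∫⁻ x, g x ^ p ∂μ < ⊤)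
    (hνp : ∫⁻ z in {z : ℝ | 0 < |z| ∧ |z| ≤ 1}, ENNReal.ofReal (|z| ^ p) ∂ν < ⊤) :
    ∫⁻ x, ∫⁻ z, min ((ENNReal.ofReal |z| * g x) ^ 2) 1 ∂ν ∂μ < ⊤ :=
  stmt_2_general μ ν hν p hp0 hp2 g hgp hνp
end

section
/- Let $D \subset \mathbb{R}^3$ be a bounded measurable set, let $C > 0$, and let $G : D \times D \to [0,\infty]$ be measurable with $G(x,y) \le C\,\|x-y\|^{-1}$ for all $x,y \in D$ with $x \neq y$. Let $\nu$ be any Lévy measure on $\mathbb{R}$ (i.e. $\nu(\{0\}) = 0$ and $\int_{\mathbb{R}}(|z|^2\wedge 1)\,\nu(dz) < \infty$). Then for every $x \in D$: (i) $\int_D G(x,y)^2\,dy < \infty$, and (ii) $\int_D \int_{\mathbb{R}} \bigl( |z\,G(x,y)|^2 \wedge 1 \bigr)\,\nu(dz)\,dy < \infty$. -/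
/-!
Off the diagonal `G(x, y)² ≤ C² ‖x - y‖⁻²`, and `‖·‖^(-α)` is locally integrable against Haar
measure in dimension `d` as soon as `α < d`; here `α = 2 < 3`. For the jump part,
`|z a|² ∧ 1 ≤ (a² ∨ 1) (|z|² ∧ 1)`, so the inner `ν`-integral is at most `(G(x, y)² + 1)` times
the finite Lévy integral, and `D` has finite volume.
-/

open MeasureTheory ENNReal Set

section HaarSingularKernel

variable {E : Type*} [NormedAddCommGroup E] [NormedSpace ℝ E] [FiniteDimensional ℝ E]
  [MeasurableSpace E] [BorelSpace E] {μ : Measure E} [μ.IsAddHaarMeasure]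

theorem locallyIntegrable_norm_sub_rpow_neg (hd : 1 ≤ Module.finrank ℝ E) {α : ℝ}
    (hα : α < Module.finrank ℝ E) (x : E) :
    LocallyIntegrable (fun y ↦ ‖y - x‖ ^ (-α)) μ := by
  have h₀ : LocallyIntegrable (fun y : E ↦ ‖y‖ ^ (-α)) μ :=
    locallyIntegrable_of_norm_le_rpow (C := 1) hd hα
      (ae_of_all _ fun y ↦ by
        rw [one_mul, Real.norm_of_nonneg (Real.rpow_nonneg (norm_nonneg y) _)])
      (measurable_norm.pow_const _).aestronglyMeasurable
  rw [← map_sub_right_eq_self μ x] at h₀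
  exact (locallyIntegrable_map_homeomorph (Homeomorph.subRight x)).1 h₀

theorem setLIntegral_sq_lt_top_of_le_inv_norm_sub (hd : 2 < Module.finrank ℝ E) {D : Set E}
    (hDm : MeasurableSet D) (hDb : Bornology.IsBounded D) {g : E → ℝ≥0∞} {C : ℝ} {x : E}
    (hg : ∀ y ∈ D, x ≠ y → g y ≤ ENNReal.ofReal (C * ‖x - y‖⁻¹)) :
    ∫⁻ y in D, g y ^ 2 ∂μ < ⊤ := by
  -- gives `μ` no atoms, so the diagonal `y = x` is negligible
  have : Nontrivial E := Module.nontrivial_of_finrank_pos (R := ℝ) (by omega)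
  have hloc : LocallyIntegrable (fun y ↦ ‖y - x‖ ^ (-2 : ℝ)) μ :=
    locallyIntegrable_norm_sub_rpow_neg (by omega) (by exact_mod_cast hd) x
  have hint : IntegrableOn (fun y ↦ C ^ 2 * ‖y - x‖ ^ (-2 : ℝ)) D μ :=
    ((hloc.integrableOn_isCompact hDb.isCompact_closure).mono_set subset_closure).const_mul _
  refine lt_of_le_of_lt (lintegral_mono_ae ?_) hint.hasFiniteIntegral
  filter_upwards [ae_restrict_mem hDm, ae_restrict_of_ae (μ.ae_ne x)] with y hyD hyx
  calc g y ^ 2 ≤ ENNReal.ofReal (C * ‖x - y‖⁻¹) ^ 2 := by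
        gcongr; exact hg y hyD hyx.symm
    _ ≤ ‖C * ‖x - y‖⁻¹‖ₑ ^ 2 := by gcongr; exact Real.ofReal_le_enorm _
    _ = ‖C ^ 2 * ‖y - x‖ ^ (-2 : ℝ)‖ₑ := by
        rw [← enorm_pow, norm_sub_rev, Real.rpow_neg (norm_nonneg _), mul_pow, inv_pow]
        norm_cast

end HaarSingularKernel

theorem min_mul_le_max_mul_min (a b : ℝ≥0∞) : min (a * b) 1 ≤ max b 1 * min a 1 := by
  rcases le_total b 1 with hb | hb
  · rw [max_eq_right hb, one_mul]
    exact min_le_min_right _ (mul_le_of_le_one_right' hb)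
  · rw [max_eq_left hb, mul_min, mul_one, mul_comm]
    exact min_le_min_left _ hb

theorem lintegral_min_sq_mul_le (ν : Measure ℝ) (a : ℝ≥0∞) :
    ∫⁻ z, min ((ENNReal.ofReal |z| * a) ^ 2) 1 ∂ν ≤
      (a ^ 2 + 1) * ∫⁻ z, min (ENNReal.ofReal (z ^ 2)) 1 ∂ν := by
  rw [← lintegral_const_mul _ (by fun_prop)]
  refine lintegral_mono fun z ↦ ?_
  rw [mul_pow, ← ENNReal.ofReal_pow (abs_nonneg z), sq_abs]
  exact (min_mul_le_max_mul_min _ _).trans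
    (mul_le_mul_left (max_le le_self_add le_add_self) _)

theorem stmt_4_general
    (D : Set (EuclideanSpace ℝ (Fin 3)))
    (hDm : MeasurableSet D) (hDb : Bornology.IsBounded D)
    (C : ℝ)
    (G : EuclideanSpace ℝ (Fin 3) → EuclideanSpace ℝ (Fin 3) → ℝ≥0∞)
    (hGb : ∀ x ∈ D, ∀ y ∈ D, x ≠ y →
      G x y ≤ ENNReal.ofReal (C * ‖x - y‖⁻¹))
    (ν : Measure ℝ)
    (hν : ∫⁻ z, min (ENNReal.ofReal (z ^ 2)) 1 ∂ν < ⊤) :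
    ∀ x ∈ D,
      (∫⁻ y in D, G x y ^ 2 ∂volume) < ⊤ ∧
      (∫⁻ y in D, ∫⁻ z, min ((ENNReal.ofReal |z| * G x y) ^ 2) 1 ∂ν ∂volume) < ⊤ := by
  intro x hx
  have hG : ∫⁻ y in D, G x y ^ 2 ∂volume < ⊤ :=
    setLIntegral_sq_lt_top_of_le_inv_norm_sub (by simp) hDm hDb (hGb x hx)
  refine ⟨hG, ?_⟩
  calc ∫⁻ y in D, ∫⁻ z, min ((ENNReal.ofReal |z| * G x y) ^ 2) 1 ∂ν ∂volume
      ≤ ∫⁻ y in D, (G x y ^ 2 + 1) * ∫⁻ z, min (ENNReal.ofReal (z ^ 2)) 1 ∂ν ∂volume :=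
        lintegral_mono fun y ↦ lintegral_min_sq_mul_le ν (G x y)
    _ = ((∫⁻ y in D, G x y ^ 2 ∂volume) + volume D) *
          ∫⁻ z, min (ENNReal.ofReal (z ^ 2)) 1 ∂ν := by
        rw [lintegral_mul_const' _ _ hν.ne, lintegral_add_right _ measurable_const,
          setLIntegral_const, one_mul]
    _ < ⊤ := mul_lt_top (add_lt_top.2 ⟨hG, hDb.measure_lt_top⟩) hν

/-- For a bounded measurable `D ⊆ ℝ³`, a kernel `G` dominated by `C‖x-y‖⁻¹`
off the diagonal, and any Lévy measure `ν` on `ℝ`, for every `x ∈ D`: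
(i) `∫_D G(x,y)² dy < ∞`, and (ii) `∫_D ∫_ℝ (|z G(x,y)|² ∧ 1) ν(dz) dy < ∞`. -/
theorem stmt_4
    (D : Set (EuclideanSpace ℝ (Fin 3)))
    (hDm : MeasurableSet D) (hDb : Bornology.IsBounded D)
    (C : ℝ) (hC : 0 < C)
    (G : EuclideanSpace ℝ (Fin 3) → EuclideanSpace ℝ (Fin 3) → ℝ≥0∞)
    (hGm : Measurable (Function.uncurry G))
    (hGb : ∀ x ∈ D, ∀ y ∈ D, x ≠ y →
      G x y ≤ ENNReal.ofReal (C * ‖x - y‖⁻¹))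
    (ν : Measure ℝ) (hν0 : ν {0} = 0)
    (hν : ∫⁻ z, min (ENNReal.ofReal (z ^ 2)) 1 ∂ν < ⊤) :
    ∀ x ∈ D,
      (∫⁻ y in D, G x y ^ 2 ∂volume) < ⊤ ∧
      (∫⁻ y in D, ∫⁻ z, min ((ENNReal.ofReal |z| * G x y) ^ 2) 1 ∂ν ∂volume) < ⊤ :=
  stmt_4_general D hDm hDb C G hGb ν hν
end

section
/- Let $(X, \mathcal{A}, \mu)$ be a measure space and let $(e_k)_{k \ge 1}$ be an orthonormal family in the real Hilbert space $L^2(X, \mu)$. Let $(\lambda_k)_{k \ge 1}$ be reals with $\lambda_k \ge \lambda_* > 0$, let $(b_k)_{k \ge 1}$ be reals, and let $C > 0$, $\theta > 0$ be such that $\sum_{k : \lambda_k \le t} b_k^2 \le C\,t^{\theta}$ for all $t > 0$. Then for every $\gamma > \theta/2$, the series $\sum_{k=1}^{\infty} \frac{b_k}{\lambda_k^{\gamma}}\, e_k$ converges in $L^2(X,\mu)$, and its limit $g$ satisfies $\|g\|_{L^2(X,\mu)}^2 = \sum_{k=1}^{\infty} \frac{b_k^2}{\lambda_k^{2\gamma}}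 \le \frac{2\gamma\,C}{2\gamma - \theta}\,\lambda_*^{\theta - 2\gamma}$. -/
open MeasureTheory Finset

/-!
Order the indices by increasing `λ_k` and sum by parts against the counting function
`N(t) = ∑_{λ_k ≤ t} b_k² ≤ C t^θ`: the sum `∑ b_k² λ_k^{-2γ}` is a Stieltjes integral
`∫ t^{-2γ} dN(t)`, and each layer `[M, T]` contributes at most
`C M^θ (M^{-2γ} - T^{-2γ}) ≤ 2γC/(2γ-θ) (M^{θ-2γ} - T^{θ-2γ})`, which telescopes.
Orthonormality then turns square-summability of the coefficients into convergence in `L²`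
together with Parseval's identity for the limit.
-/

theorem one_sub_rpow_le_div_mul_one_sub_rpow {u α β : ℝ} (hu : 0 ≤ u) (hβ : 0 < β)
    (hβα : β ≤ α) : 1 - u ^ α ≤ α / β * (1 - u ^ β) := by
  have h := one_add_mul_self_le_rpow_one_add (s := u ^ β - 1)
    (by linarith [Real.rpow_nonneg hu β]) ((one_le_div hβ).2 hβα)
  rw [add_sub_cancel, ← Real.rpow_mul hu, mul_div_cancel₀ _ hβ.ne'] at h
  linarith

theorem rpow_mul_sub_rpow_neg_le {θ α x y : ℝ} (hθ : 0 ≤ θ) (hθα : θ < α) (hx : 0 < x)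
    (hxy : x ≤ y) :
    x ^ θ * (x ^ (-α) - y ^ (-α)) ≤ α / (α - θ) * (x ^ (θ - α) - y ^ (θ - α)) := by
  have hy := hx.trans_le hxy
  -- divided by `x ^ (θ - α)`, this is the previous inequality at `u = x / y`
  have h := one_sub_rpow_le_div_mul_one_sub_rpow (div_pos hx hy).le (sub_pos.2 hθα)
    (by linarith : α - θ ≤ α)
  rw [Real.div_rpow hx.le hy.le, Real.div_rpow hx.le hy.le, Real.rpow_sub hx,
    Real.rpow_sub hy] at h
  rw [Real.rpow_neg hx.le, Real.rpow_neg hy.le, Real.rpow_sub hx, Real.rpow_sub hy]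
  have hxθ := Real.rpow_pos_of_pos hx θ
  have hxα := Real.rpow_pos_of_pos hx α
  have hyθ := Real.rpow_pos_of_pos hy θ
  have hyα := Real.rpow_pos_of_pos hy α
  calc x ^ θ * ((x ^ α)⁻¹ - (y ^ α)⁻¹) = x ^ θ / x ^ α * (1 - x ^ α / y ^ α) := by
        field_simp
    _ ≤ x ^ θ / x ^ α * (α / (α - θ) * (1 - x ^ α / x ^ θ / (y ^ α / y ^ θ))) := by gcongr
    _ = α / (α - θ) * (x ^ θ / x ^ α - y ^ θ / y ^ α) := by field_simp

theorem Finset.sum_mul_sub_le_of_forall_sum_le {ι : Type*} {lam w : ι → ℝ} {f G N : ℝ → ℝ}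
    {a : ℝ} (hf : AntitoneOn f (Set.Ici a)) (hG : AntitoneOn G (Set.Ici a))
    (hN : ∀ s : Finset ι, ∀ t, a ≤ t → (∀ k ∈ s, lam k ≤ t) → ∑ k ∈ s, w k ≤ N t)
    (hNG : ∀ M T, a ≤ M → M ≤ T → N M * (f M - f T) ≤ G M - G T)
    (F : Finset ι) (T : ℝ) (haT : a ≤ T) (hF : ∀ k ∈ F, a ≤ lam k ∧ lam k ≤ T) :
    ∑ k ∈ F, w k * (f (lam k) - f T) ≤ G a - G T := by
  classical
  induction F using Finset.induction_on_max_value lam generalizing T with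
  | empty => simpa using hG Set.self_mem_Ici haT haT
  | insert j s hj hmax ih =>
    set M := lam j
    have haM : a ≤ M := (hF j (mem_insert_self j s)).1
    have hMT : M ≤ T := (hF j (mem_insert_self j s)).2
    have hlower : ∑ k ∈ s, w k * (f (lam k) - f M) ≤ G a - G M :=
      ih M haM fun k hk => ⟨(hF k (mem_insert_of_mem hk)).1, hmax k hk⟩
    have hupper : (∑ k ∈ insert j s, w k) * (f M - f T) ≤ G M - G T :=
      (mul_le_mul_of_nonneg_right
        (hN _ M haM fun k hk => (mem_insert.1 hk).elim (fun h => h ▸ le_rfl) (hmax k))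
        (sub_nonneg.2 (hf haM (haM.trans hMT) hMT))).trans (hNG M T haM hMT)
    calc ∑ k ∈ insert j s, w k * (f (lam k) - f T)
        = ∑ k ∈ s, w k * (f (lam k) - f M) + (∑ k ∈ insert j s, w k) * (f M - f T) := by
          rw [sum_insert hj, sum_insert hj, add_mul, sum_mul, add_left_comm,
            ← sum_add_distrib]
          congr 1
          exact sum_congr rfl fun k _ => by ring
      _ ≤ G a - G T := by linarith

theorem sum_div_rpow_le_of_forall_sum_le {ι : Type*} {lam w : ι → ℝ} {a C θ α : ℝ} (ha : 0 < a)
    (hlam : ∀ k, a ≤ lam k) (hC : 0 ≤ C) (hθ : 0 ≤ θ) (hθα : θ < α)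
    (hw : ∀ t, 0 < t → ∀ s : Finset ι, (∀ k ∈ s, lam k ≤ t) → ∑ k ∈ s, w k ≤ C * t ^ θ)
    (F : Finset ι) : ∑ k ∈ F, w k / lam k ^ α ≤ α * C / (α - θ) * a ^ (θ - α) := by
  have hCK : C ≤ α * C / (α - θ) := by
    rw [le_div_iff₀ (sub_pos.2 hθα)]
    nlinarith
  have hpow_anti : ∀ {β : ℝ}, β ≤ 0 → AntitoneOn (fun t : ℝ => t ^ β) (Set.Ici a) :=
    fun hβ _ hs _ _ hst => Real.rpow_le_rpow_of_nonpos (ha.trans_le hs) hst hβ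
  obtain ⟨T₀, hT₀⟩ := (F.image lam).exists_le
  set T := max a T₀
  have hT : 0 < T := ha.trans_le (le_max_left a T₀)
  have hlamT : ∀ k ∈ F, lam k ≤ T := fun k hk =>
    (hT₀ _ (mem_image_of_mem lam hk)).trans (le_max_right a T₀)
  have hlayers := Finset.sum_mul_sub_le_of_forall_sum_le (w := w) (N := fun t => C * t ^ θ)
    (G := fun t => α * C / (α - θ) * t ^ (θ - α)) (hpow_anti (by linarith : -α ≤ 0))
    (fun _ hs _ ht hst => mul_le_mul_of_nonneg_left
      (hpow_anti (by linarith : θ - α ≤ 0) hs ht hst) (hC.trans hCK))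
    (fun s t hat hs => hw t (ha.trans_le hat) s hs)
    (fun M T haM hMT => calc
      C * M ^ θ * (M ^ (-α) - T ^ (-α)) = C * (M ^ θ * (M ^ (-α) - T ^ (-α))) := by ring
      _ ≤ C * (α / (α - θ) * (M ^ (θ - α) - T ^ (θ - α))) :=
        mul_le_mul_of_nonneg_left (rpow_mul_sub_rpow_neg_le hθ hθα (ha.trans_le haM) hMT) hC
      _ = α * C / (α - θ) * M ^ (θ - α) - α * C / (α - θ) * T ^ (θ - α) := by ring)
    F T (le_max_left a T₀) fun k hk => ⟨hlam k, hlamT k hk⟩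
  have htail : (∑ k ∈ F, w k) * T ^ (-α) ≤ α * C / (α - θ) * T ^ (θ - α) :=
    calc (∑ k ∈ F, w k) * T ^ (-α) ≤ C * T ^ θ * T ^ (-α) :=
          mul_le_mul_of_nonneg_right (hw T hT F hlamT) (Real.rpow_nonneg hT.le _)
      _ = C * T ^ (θ - α) := by rw [mul_assoc, ← Real.rpow_add hT, sub_eq_add_neg]
      _ ≤ α * C / (α - θ) * T ^ (θ - α) :=
          mul_le_mul_of_nonneg_right hCK (Real.rpow_nonneg hT.le _)
  calc ∑ k ∈ F, w k / lam k ^ α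
      = ∑ k ∈ F, w k * (lam k ^ (-α) - T ^ (-α)) + (∑ k ∈ F, w k) * T ^ (-α) := by
        rw [sum_mul, ← sum_add_distrib]
        refine sum_congr rfl fun k _ => ?_
        rw [Real.rpow_neg (ha.trans_le (hlam k)).le]
        ring
    _ ≤ α * C / (α - θ) * a ^ (θ - α) := by linarith

theorem Orthonormal.exists_hasSum_smul_norm_sq {𝕜 ι E : Type*} [RCLike 𝕜] [NormedAddCommGroup E]
    [InnerProductSpace 𝕜 E] [CompleteSpace E] {e : ι → E} (he : Orthonormal 𝕜 e) {c : ι → 𝕜}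
    (hc : Summable fun i => ‖c i‖ ^ 2) :
    ∃ g, HasSum (fun i => c i • e i) g ∧ ‖g‖ ^ 2 = ∑' i, ‖c i‖ ^ 2 := by
  have hV := he.orthogonalFamily
  obtain ⟨g, hg⟩ := (hV.summable_iff_norm_sq_summable c).2 hc
  refine ⟨g, hg, tendsto_nhds_unique ((continuous_norm.pow 2).continuousAt.tendsto.comp hg) ?_⟩
  exact hc.hasSum.congr fun s => (hV.norm_sum c s).symm

/-- If `(e_k)` is an orthonormal family in the real Hilbert space `L²(X,μ)`,
`λ_k ≥ λ_* > 0`, and `∑_{λ_k ≤ t} b_k² ≤ C t^θ` for all `t > 0`, then for `γ > θ/2` the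
series `∑ (b_k/λ_k^γ) e_k` converges in `L²(X,μ)` and its limit `g` satisfies
`‖g‖² = ∑ b_k²/λ_k^{2γ} ≤ 2γC/(2γ-θ) · λ_*^{θ-2γ}`. -/
theorem stmt_7
    {X : Type*} [MeasurableSpace X] (μ : Measure X)
    (e : ℕ → MeasureTheory.Lp ℝ 2 μ) (he : Orthonormal ℝ e)
    (lam : ℕ → ℝ) (lamStar : ℝ) (hlamStar : 0 < lamStar) (hlam : ∀ k, lamStar ≤ lam k)
    (b : ℕ → ℝ)
    (C θ : ℝ) (hC : 0 < C) (hθ : 0 < θ)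
    (hsum : ∀ t : ℝ, 0 < t → ∀ F : Finset ℕ, (∀ k ∈ F, lam k ≤ t) →
      ∑ k ∈ F, (b k) ^ 2 ≤ C * t ^ θ)
    (γ : ℝ) (hγ : θ / 2 < γ) :
    ∃ g : MeasureTheory.Lp ℝ 2 μ,
      HasSum (fun k => (b k / lam k ^ γ) • e k) g ∧
      Summable (fun k => b k ^ 2 / lam k ^ (2 * γ)) ∧
      ‖g‖ ^ 2 = ∑' k, b k ^ 2 / lam k ^ (2 * γ) ∧
      ∑' k, b k ^ 2 / lam k ^ (2 * γ) ≤ 2 * γ * C / (2 * γ - θ) * lamStar ^ (θ - 2 * γ) := by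
  have hlam_pos : ∀ k, 0 < lam k := fun k => hlamStar.trans_le (hlam k)
  have hcoeff : ∀ k, ‖b k / lam k ^ γ‖ ^ 2 = b k ^ 2 / lam k ^ (2 * γ) := fun k => by
    rw [Real.norm_eq_abs, sq_abs, div_pow, ← Real.rpow_mul_natCast (hlam_pos k).le,
      Nat.cast_ofNat, mul_comm γ]
  have hbound := sum_div_rpow_le_of_forall_sum_le hlamStar hlam hC.le hθ.le
    (by linarith : θ < 2 * γ) hsum
  have hsummable : Summable fun k => b k ^ 2 / lam k ^ (2 * γ) :=
    summable_of_sum_le (fun k => div_nonneg (sq_nonneg _) (Real.rpow_nonneg (hlam_pos k).le _))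
      hbound
  obtain ⟨g, hg, hnorm⟩ :=
    he.exists_hasSum_smul_norm_sq (hsummable.congr fun k => (hcoeff k).symm)
  exact ⟨g, hg, hsummable, hnorm.trans (tsum_congr hcoeff), hsummable.tsum_le_of_sum_le hbound⟩
end
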